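/- arXiv:2302.11692 — 3 statements merged into one kernel-verified Lean document; each statement's English description precedes it below -/
import Mathlib

section
/- The fibers of the Hopf map are great circles: for every unit vector x ∈ ℝ⁴, the set of unit vectors y ∈ ℝ⁴ with ψ(y) = ψ(x) is exactly the great circle {cos θ · x + sin θ · X₁(x) : θ ∈ ℝ}, i.e. the great circle of S³ passing through x and X₁(x). -/
noncomputable section

/-- The Hopf map `ψ : ℝ⁴ → ℝ³`. -/
def hopf (x : EuclideanSpace ℝ (Fin 4)) : EuclideanSpace ℝ (Fin 3) :=
  (WithLp.equiv 2 (Fin 3 → ℝ)).symm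
    ![x 0 * x 2 + x 1 * x 3, x 1 * x 2 - x 0 * x 3,
      ((x 0) ^ 2 + (x 1) ^ 2 - (x 2) ^ 2 - (x 3) ^ 2) / 2]

/-- The vector field `X₁(x) = (−x², x¹, −x⁴, x³)` on `ℝ⁴`. -/
def X1 (x : EuclideanSpace ℝ (Fin 4)) : EuclideanSpace ℝ (Fin 4) :=
  (WithLp.equiv 2 (Fin 4 → ℝ)).symm ![-x 1, x 0, -x 3, x 2]

lemma norm_eq_one_iff' (x : EuclideanSpace ℝ (Fin 4)) :
    ‖x‖ = 1 ↔ x 0 ^ 2 + x 1 ^ 2 + x 2 ^ 2 + x 3 ^ 2 = 1 := by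
  rw [EuclideanSpace.norm_eq, Fin.sum_univ_four]
  simp only [Real.norm_eq_abs, sq_abs]
  exact Real.sqrt_eq_one

/-- The fibers of the Hopf map are the great circles through `x` and `X₁(x)`. -/
theorem hopf_fibers_are_great_circles (x : EuclideanSpace ℝ (Fin 4)) (hx : ‖x‖ = 1) :
    {y : EuclideanSpace ℝ (Fin 4) | ‖y‖ = 1 ∧ hopf y = hopf x} =
      {y : EuclideanSpace ℝ (Fin 4) | ∃ θ : ℝ, y = Real.cos θ • x + Real.sin θ • X1 x} := by
  have hN : x 0 ^ 2 + x 1 ^ 2 + x 2 ^ 2 + x 3 ^ 2 = 1 := (norm_eq_one_iff' x).mp hx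
  ext y
  simp only [Set.mem_setOf_eq]
  constructor
  · rintro ⟨hy, hh⟩
    have hM : y 0 ^ 2 + y 1 ^ 2 + y 2 ^ 2 + y 3 ^ 2 = 1 := (norm_eq_one_iff' y).mp hy
    have h1 : y 0 * y 2 + y 1 * y 3 = x 0 * x 2 + x 1 * x 3 := by
      have := congrArg (fun v => v 0) hh
      simpa [hopf] using this
    have h2 : y 1 * y 2 - y 0 * y 3 = x 1 * x 2 - x 0 * x 3 := by
      have := congrArg (fun v => v 1) hh
      simpa [hopf] using this
    have h3 : y 0 ^ 2 + y 1 ^ 2 - y 2 ^ 2 - y 3 ^ 2 =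
        x 0 ^ 2 + x 1 ^ 2 - x 2 ^ 2 - x 3 ^ 2 := by
      have := congrArg (fun v => v 2) hh
      simp only [hopf, WithLp.equiv_symm_apply, PiLp.toLp_apply, Matrix.cons_val_two, Matrix.tail_cons,
        Matrix.head_cons] at this
      linarith
    set c : ℝ := y 0 * x 0 + y 1 * x 1 + y 2 * x 2 + y 3 * x 3 with hc
    set s : ℝ := y 1 * x 0 - y 0 * x 1 + y 3 * x 2 - y 2 * x 3 with hs
    have hcs : c ^ 2 + s ^ 2 = 1 := by
      rw [hc, hs]
      linear_combination (1/2 + x 0 * x 0 + x 1 * x 1 + y 2 * y 2 + y 3 * y 3) * hN +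
        (1/2) * hM + (-1/2 + x 0 * x 0 + x 1 * x 1) * h3 +
        (2 * x 0 * x 2 + 2 * x 1 * x 3) * h1 + (-2 * x 0 * x 3 + 2 * x 1 * x 2) * h2
    set z : Complex := ⟨c, s⟩ with hz
    have hzabs : ‖z‖ = 1 := by
      rw [Complex.norm_def, Complex.normSq_apply]
      simp only [hz]
      rw [show c * c + s * s = 1 by nlinarith [hcs]]
      exact Real.sqrt_one
    have hz0 : z ≠ 0 := by
      intro h; rw [h] at hzabs; simp at hzabs
    refine ⟨Complex.arg z, ?_⟩
    have hcos : Real.cos (Complex.arg z) = c := by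
      rw [Complex.cos_arg hz0, hzabs]; simp [hz]
    have hsin : Real.sin (Complex.arg z) = s := by
      rw [Complex.sin_arg, hzabs]; simp [hz]
    ext i
    have happ : ∀ i, (Real.cos (Complex.arg z) • x + Real.sin (Complex.arg z) • X1 x) i =
        c * x i + s * X1 x i := by
      intro i
      simp [PiLp.add_apply, PiLp.smul_apply, smul_eq_mul, hcos, hsin]
    fin_cases i
    · show y 0 = (Real.cos (Complex.arg z) • x + Real.sin (Complex.arg z) • X1 x) 0
      rw [happ 0]
      simp only [X1, WithLp.equiv_symm_apply, PiLp.toLp_apply, Matrix.cons_val_zero, hc, hs]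
      linear_combination (-1/2 * y 0) * hN + (-1/2 * y 0) * hM + (1/2 * y 0) * h3 +
        y 2 * h1 + (-y 3) * h2
    · show y 1 = (Real.cos (Complex.arg z) • x + Real.sin (Complex.arg z) • X1 x) 1
      rw [happ 1]
      simp only [X1, WithLp.equiv_symm_apply, PiLp.toLp_apply, Matrix.cons_val_one, Matrix.cons_val_zero, Matrix.head_cons,
        hc, hs]
      linear_combination (-1/2 * y 1) * hN + (-1/2 * y 1) * hM + (1/2 * y 1) * h3 +
        y 3 * h1 + y 2 * h2
    · show y 2 = (Real.cos (Complex.arg z) • x + Real.sin (Complex.arg z) • X1 x) 2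
      rw [happ 2]
      simp only [X1, WithLp.equiv_symm_apply, PiLp.toLp_apply, Matrix.cons_val_two, Matrix.tail_cons,
        Matrix.head_cons, hc, hs]
      linear_combination (-1/2 * y 2) * hN + (-1/2 * y 2) * hM + (-1/2 * y 2) * h3 +
        y 0 * h1 + y 1 * h2
    · show y 3 = (Real.cos (Complex.arg z) • x + Real.sin (Complex.arg z) • X1 x) 3
      rw [happ 3]
      simp only [X1, WithLp.equiv_symm_apply, PiLp.toLp_apply, hc, hs]
      norm_num [Matrix.cons_val_fin_one, Matrix.cons_val_succ, Matrix.cons_val_three]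
      linear_combination (-1/2 * y 3) * hN + (-1/2 * y 3) * hM + (-1/2 * y 3) * h3 +
        y 1 * h1 + (-y 0) * h2
  · rintro ⟨θ, rfl⟩
    have pyth : Real.sin θ ^ 2 + Real.cos θ ^ 2 = 1 := Real.sin_sq_add_cos_sq θ
    have happ : ∀ i, (Real.cos θ • x + Real.sin θ • X1 x) i =
        Real.cos θ * x i + Real.sin θ * X1 x i := by
      intro i
      simp [PiLp.add_apply, PiLp.smul_apply, smul_eq_mul]
    have e0 : (Real.cos θ • x + Real.sin θ • X1 x) 0 = Real.cos θ * x 0 - Real.sin θ * x 1 := by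
      rw [happ 0]; simp [X1]; ring
    have e1 : (Real.cos θ • x + Real.sin θ • X1 x) 1 = Real.sin θ * x 0 + Real.cos θ * x 1 := by
      rw [happ 1]; simp [X1]; ring
    have e2 : (Real.cos θ • x + Real.sin θ • X1 x) 2 = Real.cos θ * x 2 - Real.sin θ * x 3 := by
      rw [happ 2]; simp [X1]; ring
    have e3 : (Real.cos θ • x + Real.sin θ • X1 x) 3 = Real.sin θ * x 2 + Real.cos θ * x 3 := by
      rw [happ 3]
      norm_num [X1, Matrix.cons_val_fin_one, Matrix.cons_val_succ, Matrix.cons_val_three]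
      ring
    constructor
    · rw [norm_eq_one_iff', e0, e1, e2, e3]
      linear_combination (x 0 ^ 2 + x 1 ^ 2 + x 2 ^ 2 + x 3 ^ 2) * pyth + hN
    · ext i
      fin_cases i
      · show (hopf (Real.cos θ • x + Real.sin θ • X1 x)) 0 = (hopf x) 0
        simp only [hopf, WithLp.equiv_symm_apply, PiLp.toLp_apply, Matrix.cons_val_zero, e0, e1, e2, e3]
        linear_combination (x 0 * x 2 + x 1 * x 3) * pyth
      · show (hopf (Real.cos θ • x + Real.sin θ • X1 x)) 1 = (hopf x) 1
        simp only [hopf, WithLp.equiv_symm_apply, PiLp.toLp_apply, Matrix.cons_val_one, Matrix.cons_val_zero, Matrix.head_cons,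
          e0, e1, e2, e3]
        linear_combination (x 1 * x 2 - x 0 * x 3) * pyth
      · show (hopf (Real.cos θ • x + Real.sin θ • X1 x)) 2 = (hopf x) 2
        simp only [hopf, WithLp.equiv_symm_apply, PiLp.toLp_apply, Matrix.cons_val_two, Matrix.tail_cons,
          Matrix.head_cons, e0, e1, e2, e3]
        linear_combination ((x 0 ^ 2 + x 1 ^ 2 - x 2 ^ 2 - x 3 ^ 2) / 2) * pyth
end
end

section
/- The Hopf map ψ restricted to the unit sphere S³ is surjective onto the sphere S²(1/2): for every p ∈ ℝ³ with ‖p‖ = 1/2 there exists x ∈ ℝ⁴ with ‖x‖ = 1 and ψ(x) = p. -/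
noncomputable section

/-- The Hopf map restricted to `S³` is surjective onto the sphere of radius `1/2`. -/
theorem hopf_surjective_onto_half_sphere (p : EuclideanSpace ℝ (Fin 3)) (hp : ‖p‖ = 1 / 2) :
    ∃ x : EuclideanSpace ℝ (Fin 4), ‖x‖ = 1 ∧ hopf x = p := by
  have hsum : p 0 ^ 2 + p 1 ^ 2 + p 2 ^ 2 = 1 / 4 := by
    have h2 : ‖p‖ ^ 2 = (1 / 2 : ℝ) ^ 2 := by rw [hp]
    rw [EuclideanSpace.norm_eq, Real.sq_sqrt (by positivity)] at h2
    simp only [Fin.sum_univ_three, Real.norm_eq_abs, sq_abs] at h2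
    rw [h2]; norm_num
  by_cases hb : (1 : ℝ) / 2 - p 2 = 0
  · have h2 : p 2 = 1 / 2 := by linarith
    have h0 : p 0 = 0 := by nlinarith [sq_nonneg (p 0), sq_nonneg (p 1)]
    have h1 : p 1 = 0 := by nlinarith [sq_nonneg (p 0), sq_nonneg (p 1)]
    refine ⟨(WithLp.equiv 2 (Fin 4 → ℝ)).symm ![1, 0, 0, 0], ?_, ?_⟩
    · rw [EuclideanSpace.norm_eq]
      simp [Fin.sum_univ_four, WithLp.equiv_symm_apply, PiLp.toLp_apply]
    · ext i
      fin_cases i <;>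
        simp [hopf, WithLp.equiv_symm_apply, PiLp.toLp_apply, h0, h1, h2]
  · have hple : p 2 ^ 2 ≤ 1 / 4 := by nlinarith [sq_nonneg (p 0), sq_nonneg (p 1)]
    have hble : p 2 ≤ 1 / 2 := by nlinarith
    have hbpos : 0 < 1 / 2 - p 2 := lt_of_le_of_ne (by linarith) (Ne.symm hb)
    obtain ⟨s, hs2, hspos⟩ : ∃ s : ℝ, s ^ 2 = 1 / 2 - p 2 ∧ 0 < s :=
      ⟨Real.sqrt (1 / 2 - p 2), Real.sq_sqrt hbpos.le, Real.sqrt_pos.mpr hbpos⟩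
    have hsne : s ≠ 0 := hspos.ne'
    have h01 : p 0 ^ 2 + p 1 ^ 2 = (1 / 2 - p 2) * (1 / 2 + p 2) := by nlinarith
    refine ⟨(WithLp.equiv 2 (Fin 4 → ℝ)).symm ![p 0 / s, p 1 / s, s, 0], ?_, ?_⟩
    · rw [EuclideanSpace.norm_eq]
      have key : ∑ i, ‖((WithLp.equiv 2 (Fin 4 → ℝ)).symm
          ![p 0 / s, p 1 / s, s, 0]) i‖ ^ 2 = 1 := by
        simp only [Fin.sum_univ_four, WithLp.equiv_symm_apply, PiLp.toLp_apply, Matrix.cons_val_zero,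
          Matrix.cons_val_one, Matrix.head_cons, Matrix.cons_val_two, Matrix.tail_cons,
          Matrix.cons_val_three, Real.norm_eq_abs, sq_abs, div_pow]
        field_simp
        nlinarith
      rw [key, Real.sqrt_one]
    · ext i
      fin_cases i <;>
        simp only [hopf, WithLp.equiv_symm_apply, PiLp.toLp_apply, Matrix.cons_val_zero, Matrix.cons_val_one,
          Matrix.head_cons, Matrix.cons_val_two, Matrix.tail_cons, Matrix.cons_val_three,
          Fin.isValue, div_pow, Fin.zero_eta, Fin.mk_one, Fin.reduceFinMk,
          mul_zero, add_zero, sub_zero]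
      · field_simp
      · field_simp
      · have h2' : p (⟨2, by omega⟩ : Fin 3) = p 2 := rfl
        field_simp
        nlinarith
end
end

section
/- The Hopf map is a Riemannian submersion on horizontal vectors: for every unit vector x ∈ ℝ⁴ and every pair of vectors u, v ∈ ℝ⁴ that are horizontal at x (i.e. ⟨u, x⟩ = ⟨v, x⟩ = 0 and ⟨u, X₁(x)⟩ = ⟨v, X₁(x)⟩ = 0), the derivative of ψ preserves inner products: ⟨Dψₓ(u), Dψₓ(v)⟩ = ⟨u, v⟩; in particular ‖Dψₓ(u)‖ = ‖u‖ for every horizontal vector u at x. -/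
/-!
The Hopf map is quadratic, so `ψ (x + t • u) = ψ x + t • Dψₓ u + t ^ 2 • ψ u`, which identifies
its derivative with an explicit bilinear expression in `x` and `u`. For that expression one checks
the Lagrange-type identity `⟪Dψₓ u, Dψₓ v⟫ = ‖x‖² ⟪u, v⟫ - ⟪u, X₁ x⟫ ⟪v, X₁ x⟫`, from which the
claim is immediate when `‖x‖ = 1`.
-/

noncomputable section

def hopfDeriv (x u : EuclideanSpace ℝ (Fin 4)) : EuclideanSpace ℝ (Fin 3) :=
  !₂[x 0 * u 2 + x 2 * u 0 + x 1 * u 3 + x 3 * u 1,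
    x 1 * u 2 + x 2 * u 1 - x 0 * u 3 - x 3 * u 0,
    x 0 * u 0 + x 1 * u 1 - x 2 * u 2 - x 3 * u 3]

theorem hopf_add_smul (x u : EuclideanSpace ℝ (Fin 4)) (t : ℝ) :
    hopf (x + t • u) = hopf x + t • hopfDeriv x u + t ^ 2 • hopf u := by
  ext i
  fin_cases i <;>
    simp only [hopf, hopfDeriv, WithLp.equiv_symm_apply, PiLp.add_apply, PiLp.smul_apply,
      smul_eq_mul, Fin.zero_eta, Fin.mk_one, Fin.reduceFinMk, Fin.isValue, Matrix.cons_val_zero,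
      Matrix.cons_val_one, Matrix.cons_val] <;>
    ring

theorem differentiable_hopf : Differentiable ℝ hopf := by
  rw [differentiable_euclidean]
  intro i
  fin_cases i <;>
    simp only [hopf, WithLp.equiv_symm_apply, Fin.zero_eta, Fin.mk_one, Fin.reduceFinMk,
      Fin.isValue, Matrix.cons_val_zero, Matrix.cons_val_one, Matrix.cons_val] <;>
    fun_prop

theorem hasLineDerivAt_hopf (x u : EuclideanSpace ℝ (Fin 4)) :
    HasLineDerivAt ℝ hopf (hopfDeriv x u) x u := by
  have h := (((hasDerivAt_id (0 : ℝ)).smul_const (hopfDeriv x u)).const_add (hopf x)).fun_add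
    ((hasDerivAt_pow 2 (0 : ℝ)).smul_const (hopf u))
  unfold HasLineDerivAt
  simp_rw [hopf_add_smul]
  simpa using h

theorem fderiv_hopf_apply (x u : EuclideanSpace ℝ (Fin 4)) :
    fderiv ℝ hopf x u = hopfDeriv x u := by
  rw [← differentiable_hopf.differentiableAt.lineDeriv_eq_fderiv]
  exact (hasLineDerivAt_hopf x u).lineDeriv

theorem inner_hopfDeriv_hopfDeriv (x u v : EuclideanSpace ℝ (Fin 4)) :
    inner ℝ (hopfDeriv x u) (hopfDeriv x v) =
      ‖x‖ ^ 2 * inner ℝ u v - inner ℝ u (X1 x) * inner ℝ v (X1 x) := by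
  simp only [← real_inner_self_eq_norm_sq, PiLp.inner_apply, Fin.sum_univ_four,
    Fin.sum_univ_three, hopfDeriv, X1, WithLp.equiv_symm_apply, RCLike.inner_apply,
    Real.ringHom_apply, Fin.isValue, Matrix.cons_val_zero, Matrix.cons_val_one, Matrix.cons_val]
  ring

/-- The Hopf map is a Riemannian submersion: its derivative preserves inner products of
horizontal vectors; in particular it preserves norms of horizontal vectors. -/
theorem hopf_riemannian_submersion (x : EuclideanSpace ℝ (Fin 4)) (hx : ‖x‖ = 1) :
    (∀ u v : EuclideanSpace ℝ (Fin 4),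
      (inner ℝ u x : ℝ) = 0 → (inner ℝ v x : ℝ) = 0 →
      (inner ℝ u (X1 x) : ℝ) = 0 → (inner ℝ v (X1 x) : ℝ) = 0 →
      (inner ℝ (fderiv ℝ hopf x u) (fderiv ℝ hopf x v) : ℝ) = (inner ℝ u v : ℝ)) ∧
    ∀ u : EuclideanSpace ℝ (Fin 4),
      (inner ℝ u x : ℝ) = 0 → (inner ℝ u (X1 x) : ℝ) = 0 →
      ‖fderiv ℝ hopf x u‖ = ‖u‖ := by
  have inner_fderiv : ∀ u v : EuclideanSpace ℝ (Fin 4),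
      (inner ℝ u (X1 x) : ℝ) = 0 →
      (inner ℝ (fderiv ℝ hopf x u) (fderiv ℝ hopf x v) : ℝ) = (inner ℝ u v : ℝ) := by
    intro u v hu
    rw [fderiv_hopf_apply, fderiv_hopf_apply, inner_hopfDeriv_hopfDeriv, hx, hu]
    ring
  refine ⟨fun u v _ _ hu _ => inner_fderiv u v hu, fun u _ hu => ?_⟩
  have h := inner_fderiv u u hu
  rw [real_inner_self_eq_norm_sq, real_inner_self_eq_norm_sq] at h
  exact (sq_eq_sq₀ (norm_nonneg _) (norm_nonneg _)).mp h
end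
end
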